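/- arXiv:2506.05216 — 4 statements merged into one kernel-verified Lean document; each statement's English description precedes it below -/
import Mathlib

section
/- For any d ≥ 2 and any feature index i ∈ [d], the sum over all subsets S of [d] containing i (with S ≠ ∅ and S ≠ [d] not required, but 1 ≤ |S| ≤ d−1) of the kernel weight k(S) = (d−1)/(binom(d,|S|)·|S|·(d−|S|)) equals (d−1)·H_{d−1}/d, where H_n = ∑_{j=1}^n 1/j is the n-th harmonic number. -/
open Finset

/-!
Group the sets `S ∋ i` by their size `h`: there are `C(d-1, h-1)` of them, and since
`h * C(d, h) = d * C(d-1, h-1)`, each layer contributes `C(d-1, h-1) * k(h) = (d-1) / (d * (d-h))`.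
Summing over `1 ≤ h ≤ d-1` and reflecting `h ↦ d - h` leaves `(d-1)/d * H_{d-1}`.
-/

namespace Finset

variable {α M : Type*} [Fintype α] [DecidableEq α] [AddCommMonoid M]

theorem sum_filter_mem_eq_sum_powerset_erase (i : α) (g : Finset α → M) :
    ∑ S with i ∈ S, g S = ∑ T ∈ (univ.erase i).powerset, g (insert i T) := by
  rw [sum_filter, ← powerset_univ, ← insert_erase (mem_univ i),
    sum_powerset_insert (notMem_erase i univ), insert_erase (mem_univ i),
    sum_eq_zero fun T hT =>
      if_neg (notMem_of_mem_powerset_of_notMem hT (notMem_erase i univ)), zero_add]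
  simp only [mem_insert_self, if_true]

theorem sum_filter_mem_apply_card (i : α) (f : ℕ → M) :
    ∑ S with i ∈ S, f #S =
      ∑ k ∈ range (Fintype.card α), (Fintype.card α - 1).choose k • f (k + 1) := by
  rw [sum_filter_mem_eq_sum_powerset_erase,
    sum_congr rfl fun T hT => by
      rw [card_insert_of_notMem (notMem_of_mem_powerset_of_notMem hT (notMem_erase i univ))],
    sum_powerset_apply_card (fun k => f (k + 1)), card_erase_of_mem (mem_univ i), card_univ,
    Nat.sub_add_cancel (Fintype.card_pos_iff.2 ⟨i⟩)]

end Finset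

theorem sum_range_one_div_sub_eq_sum_Icc (n : ℕ) :
    ∑ k ∈ range n, (1 : ℝ) / (n - k) = ∑ j ∈ Icc 1 n, (1 : ℝ) / j := by
  calc ∑ k ∈ range n, (1 : ℝ) / (n - k)
      = ∑ k ∈ range n, (1 : ℝ) / ((n - 1 - k + 1 : ℕ) : ℝ) := sum_congr rfl fun k hk => by
        rw [show n - 1 - k + 1 = n - k by have := mem_range.1 hk; omega,
          Nat.cast_sub (mem_range.1 hk).le]
    _ = ∑ k ∈ range n, (1 : ℝ) / ((k + 1 : ℕ) : ℝ) :=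
        sum_range_reflect (fun k => (1 : ℝ) / ((k + 1 : ℕ) : ℝ)) n
    _ = ∑ j ∈ Icc 1 n, (1 : ℝ) / j := by
      rw [range_eq_Ico, sum_Ico_add' (fun j : ℕ => (1 : ℝ) / j), zero_add,
        Ico_add_one_right_eq_Icc]

noncomputable def shapleyKernel (d h : ℕ) : ℝ :=
  ((d : ℝ) - 1) / ((d.choose h : ℝ) * h * (d - h))

theorem choose_mul_shapleyKernel_succ (n k : ℕ) (hk : k < n) :
    n.choose k * shapleyKernel (n + 1) (k + 1) = n / (n + 1) * (1 / (n - k)) := by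
  have hchoose : ((n + 1 : ℕ) : ℝ) * n.choose k = (n + 1).choose (k + 1) * (k + 1 : ℕ) := by
    exact_mod_cast Nat.add_one_mul_choose_eq n k
  have hnk : (n : ℝ) - k ≠ 0 := sub_ne_zero.2 (by exact_mod_cast hk.ne')
  have : ((n + 1).choose (k + 1) : ℝ) ≠ 0 := by exact_mod_cast (Nat.choose_pos (by omega)).ne'
  push_cast at hchoose
  simp only [shapleyKernel, Nat.cast_add, Nat.cast_one, add_sub_cancel_right,
    add_sub_add_right_eq_sub]
  field_simp
  linear_combination (n : ℝ) * hchoose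

theorem stmt_0_general (d : ℕ) (i : Fin d) :
    ∑ S ∈ Finset.univ.filter
        (fun S : Finset (Fin d) => i ∈ S ∧ 1 ≤ S.card ∧ S.card ≤ d - 1),
      ((d : ℝ) - 1) / ((d.choose S.card : ℝ) * (S.card : ℝ) * ((d : ℝ) - (S.card : ℝ)))
      = ((d : ℝ) - 1) * (∑ j ∈ Finset.Icc 1 (d - 1), (1 : ℝ) / (j : ℝ)) / (d : ℝ) := by
  obtain ⟨n, rfl⟩ := Nat.exists_eq_add_one_of_ne_zero i.pos.ne'
  rw [← filter_filter, sum_filter]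
  refine (sum_filter_mem_apply_card i fun h =>
    if 1 ≤ h ∧ h ≤ n + 1 - 1 then shapleyKernel (n + 1) h else 0).trans ?_
  have hterm : ∀ k ∈ range n, n.choose k •
      (if 1 ≤ k + 1 ∧ k + 1 ≤ n then shapleyKernel (n + 1) (k + 1) else 0) =
        n / (n + 1) * (1 / ((n : ℝ) - k)) := fun k hk => by
    rw [if_pos (by have := mem_range.1 hk; omega), nsmul_eq_mul,
      choose_mul_shapleyKernel_succ n k (mem_range.1 hk)]
  rw [Fintype.card_fin, Nat.add_sub_cancel, sum_range_succ, sum_congr rfl hterm, if_neg (by omega),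
    smul_zero, add_zero, ← mul_sum, sum_range_one_div_sub_eq_sum_Icc]
  push_cast
  ring

/-- For any `d ≥ 2` and any feature index `i`, the sum over all subsets `S` of `[d]`
containing `i` with `1 ≤ |S| ≤ d-1` of the kernel weight
`k(S) = (d-1)/(C(d,|S|)·|S|·(d-|S|))` equals `(d-1)·H_{d-1}/d`. -/
theorem stmt_0 (d : ℕ) (hd : 2 ≤ d) (i : Fin d) :
    ∑ S ∈ Finset.univ.filter
        (fun S : Finset (Fin d) => i ∈ S ∧ 1 ≤ S.card ∧ S.card ≤ d - 1),
      ((d : ℝ) - 1) / ((d.choose S.card : ℝ) * (S.card : ℝ) * ((d : ℝ) - (S.card : ℝ)))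
      = ((d : ℝ) - 1) * (∑ j ∈ Finset.Icc 1 (d - 1), (1 : ℝ) / (j : ℝ)) / (d : ℝ) :=
  stmt_0_general d i
end

section
/- Let Z be the (2^d−2) × d binary matrix whose rows are indexed by nonempty proper subsets S of [d] with Z_{S,j} = 1 iff j ∈ S, and let W be the diagonal matrix with W_{S,S} = k(S) = (d−1)/(C(d,|S|)·|S|·(d−|S|)). Then Z^T W Z = ((d−1)/d)·I + c_d·1·1^T, where c_d = ((d−1)·H_{d−2} − (d−2))/d and 1 is the all-ones vector in R^d. -/
open Finset Matrix

/-- Index type: nonempty proper subsets of `[d]`. -/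
abbrev SubsetIdx (d : ℕ) := {S : Finset (Fin d) // S.Nonempty ∧ S ≠ Finset.univ}

/-- Shapley kernel weight `k(S) = (d-1)/(C(d,|S|)·|S|·(d-|S|))`. -/
noncomputable def kernelWeight (d : ℕ) (S : Finset (Fin d)) : ℝ :=
  ((d : ℝ) - 1) / ((d.choose S.card : ℝ) * (S.card : ℝ) * ((d : ℝ) - (S.card : ℝ)))

/-- The binary subset-indicator matrix `Z`. -/
def Zmat (d : ℕ) : Matrix (SubsetIdx d) (Fin d) ℝ :=
  fun S j => if j ∈ S.1 then 1 else 0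

/-- The diagonal kernel weight matrix `W`. -/
noncomputable def Wmat (d : ℕ) : Matrix (SubsetIdx d) (SubsetIdx d) ℝ :=
  Matrix.diagonal fun S => kernelWeight d S.1

/-!
Entry `(i, j)` of `Zᵀ W Z` is `∑ k(S)` over the subsets `S ⊇ {i, j}`, and `k(S)` depends only on
`|S|`. Writing `S = {i, j} ∪ U` with `U ⊆ [d] \ {i, j}` turns this into a binomially weighted sum
over `|U|`, in which `C(d - t, s - t) · k(s)` collapses to `(d - 1) / (d (d - s))` for `t = 1` and
to `(s - 1) / (d (d - s))` for `t = 2`; reflecting `s ↦ d - s` leaves harmonic sums.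
The subset `[d]`, which has no row in `Z`, may be added back because real division by zero gives
`k([d]) = 0`.
-/

theorem Finset.sum_Icc_apply_card {α M : Type*} [DecidableEq α] [AddCommMonoid M]
    {s t : Finset α} (hst : s ⊆ t) (f : ℕ → M) :
    ∑ u ∈ Icc s t, f u.card
      = ∑ m ∈ range ((t \ s).card + 1), (t \ s).card.choose m • f (m + s.card) := by
  have hdisj : ∀ u ∈ (t \ s).powerset, Disjoint s u := fun u hu =>
    disjoint_of_subset_right (mem_powerset.mp hu) disjoint_sdiff
  rw [Icc_eq_image_powerset hst, sum_image, ← sum_powerset_apply_card]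
  · exact sum_congr rfl fun u hu => by rw [card_union_of_disjoint (hdisj u hu), add_comm]
  · intro u hu v hv huv
    rw [← union_sdiff_cancel_left (hdisj u hu), ← union_sdiff_cancel_left (hdisj v hv)]
    exact congrArg (· \ s) huv

theorem harmonic_eq_sum_range_inv_sub (n : ℕ) :
    (harmonic n : ℝ) = ∑ m ∈ range n, ((n : ℝ) - m)⁻¹ := by
  rw [harmonic, ← sum_range_reflect]
  push_cast
  refine sum_congr rfl fun m hm => ?_
  rw [Nat.cast_sub (by grind), Nat.cast_sub (by grind)]
  ring_nf

theorem sum_Icc_one_div_eq_harmonic (n : ℕ) :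
    ∑ k ∈ Icc 1 n, (1 : ℝ) / k = harmonic n := by
  simp [harmonic_eq_sum_Icc]

noncomputable def shapleyWeight (d s : ℕ) : ℝ :=
  ((d : ℝ) - 1) / ((d.choose s : ℝ) * s * ((d : ℝ) - s))

theorem kernelWeight_eq_shapleyWeight (d : ℕ) (S : Finset (Fin d)) :
    kernelWeight d S = shapleyWeight d S.card := rfl

theorem shapleyWeight_self (d : ℕ) : shapleyWeight d d = 0 := by
  simp [shapleyWeight]

theorem choose_mul_shapleyWeight_add_one {n m : ℕ} (hm : m ≤ n) :
    (n + 1).choose m * shapleyWeight (n + 2) (m + 1)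
      = (n + 1) / (n + 2) * ((n + 1 : ℝ) - m)⁻¹ := by
  have hchoose : ((n + 2 : ℕ) * (n + 1).choose m : ℝ) = (n + 2).choose (m + 1) * (m + 1 : ℕ) := by
    exact_mod_cast Nat.add_one_mul_choose_eq (n + 1) m
  have hpos : (0 : ℝ) < (n + 2).choose (m + 1) := by
    exact_mod_cast Nat.choose_pos (by omega)
  have hgap : (0 : ℝ) < n + 1 - m := by
    have : (m : ℝ) ≤ n := by exact_mod_cast hm
    linarith
  simp only [shapleyWeight]
  push_cast at hchoose ⊢
  rw [show (n : ℝ) + 2 - (m + 1) = n + 1 - m by ring]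
  field_simp
  linear_combination (n + 1 : ℝ) * hchoose

theorem choose_mul_shapleyWeight_add_two {n m : ℕ} (hm : m < n) :
    n.choose m * shapleyWeight (n + 2) (m + 2) = (m + 1) / ((n + 2) * ((n : ℝ) - m)) := by
  have hchoose : ((n + 2 : ℕ) * (n + 1 : ℕ) * n.choose m : ℝ)
      = (n + 2).choose (m + 2) * (m + 2 : ℕ) * (m + 1 : ℕ) := by
    have h₁ := Nat.add_one_mul_choose_eq n m
    have h₂ := Nat.add_one_mul_choose_eq (n + 1) (m + 1)
    exact_mod_cast (by rw [mul_assoc, h₁, ← mul_assoc, h₂] :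
      (n + 2) * (n + 1) * n.choose m = (n + 2).choose (m + 2) * (m + 2) * (m + 1))
  have hpos : (0 : ℝ) < (n + 2).choose (m + 2) := by
    exact_mod_cast Nat.choose_pos (by omega)
  have hgap : (0 : ℝ) < n - m := by
    have : (m : ℝ) < n := by exact_mod_cast hm
    linarith
  simp only [shapleyWeight]
  push_cast at hchoose ⊢
  rw [show (n : ℝ) + 2 - (m + 2) = n - m by ring]
  field_simp
  linear_combination hchoose

theorem transpose_Zmat_mul_Wmat_mul_Zmat_apply (d : ℕ) (i j : Fin d) :
    ((Zmat d)ᵀ * Wmat d * Zmat d) i j = ∑ S ∈ Icc {i, j} univ, shapleyWeight d S.card := by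
  classical
  set g : Finset (Fin d) → ℝ := fun S => if {i, j} ⊆ S then shapleyWeight d S.card else 0
  have hg : ∀ S : SubsetIdx d, (Zmat d S i * kernelWeight d S.1) * Zmat d S j = g S.1 := by
    intro S
    simp only [Zmat, g, insert_subset_iff, singleton_subset_iff, kernelWeight_eq_shapleyWeight]
    split_ifs <;> simp_all
  have hg_zero : ∀ S ∈ (univ : Finset (Finset (Fin d))),
      S ∉ univ.filter (fun S => S.Nonempty ∧ S ≠ univ) → g S = 0 := by
    intro S _ hS
    simp only [mem_filter, mem_univ, true_and, not_and_or, not_not,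
      not_nonempty_iff_eq_empty] at hS
    rcases hS with rfl | rfl
    · simp [g]
    · simp [g, shapleyWeight_self]
  rw [Wmat, mul_apply]
  simp_rw [mul_diagonal, transpose_apply, hg]
  rw [← sum_subtype (univ.filter fun S => S.Nonempty ∧ S ≠ univ) (by simp),
    sum_subset (subset_univ _) hg_zero, ← sum_filter]
  congr 1
  ext S
  simp

theorem sum_Icc_singleton_shapleyWeight (n : ℕ) (i : Fin (n + 2)) :
    ∑ S ∈ Icc {i} univ, shapleyWeight (n + 2) S.card = ((n + 1) * harmonic n + 1) / (n + 2) := by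
  have hcompl : (univ \ {i}).card = n + 1 := by
    rw [← compl_eq_univ_sdiff, card_compl, Fintype.card_fin, card_singleton]
    rfl
  rw [sum_Icc_apply_card (subset_univ _), hcompl, card_singleton, sum_range_succ,
    Nat.choose_self, shapleyWeight_self, smul_zero, add_zero]
  have hterm : ∀ m ∈ range (n + 1), (n + 1).choose m • shapleyWeight (n + 2) (m + 1)
      = (n + 1) / (n + 2) * ((n + 1 : ℝ) - m)⁻¹ := fun m hm => by
    rw [nsmul_eq_mul, choose_mul_shapleyWeight_add_one (Nat.lt_succ_iff.mp (mem_range.mp hm))]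
  rw [sum_congr rfl hterm, ← mul_sum]
  have hH := harmonic_eq_sum_range_inv_sub (n + 1)
  push_cast [harmonic_succ] at hH
  rw [← hH]
  field_simp

theorem sum_Icc_pair_shapleyWeight (n : ℕ) {i j : Fin (n + 2)} (hij : i ≠ j) :
    ∑ S ∈ Icc {i, j} univ, shapleyWeight (n + 2) S.card = ((n + 1) * harmonic n - n) / (n + 2) := by
  have hcompl : (univ \ {i, j}).card = n := by
    rw [← compl_eq_univ_sdiff, card_compl, Fintype.card_fin, card_pair hij, Nat.add_sub_cancel]
  rw [sum_Icc_apply_card (subset_univ _), hcompl, card_pair hij, sum_range_succ,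
    Nat.choose_self, shapleyWeight_self, smul_zero, add_zero]
  have hterm : ∀ m ∈ range n, n.choose m • shapleyWeight (n + 2) (m + 2)
      = (n + 1) / (n + 2) * ((n : ℝ) - m)⁻¹ - 1 / (n + 2) := fun m hm => by
    have hgap : (n : ℝ) - m ≠ 0 := sub_ne_zero.mpr (by exact_mod_cast (mem_range.mp hm).ne')
    rw [nsmul_eq_mul, choose_mul_shapleyWeight_add_two (mem_range.mp hm)]
    field_simp
    ring
  rw [sum_congr rfl hterm, sum_sub_distrib, ← mul_sum, ← harmonic_eq_sum_range_inv_sub,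
    sum_const, card_range, nsmul_eq_mul]
  field_simp

/-- `Zᵀ W Z = ((d-1)/d)·I + c_d·𝟙𝟙ᵀ` with `c_d = ((d-1)H_{d-2} - (d-2))/d`. -/
theorem stmt_2 (d : ℕ) (hd : 3 ≤ d) :
    (Zmat d)ᵀ * Wmat d * Zmat d
      = (((d : ℝ) - 1) / (d : ℝ)) • (1 : Matrix (Fin d) (Fin d) ℝ)
        + ((((d : ℝ) - 1) * (∑ k ∈ Finset.Icc 1 (d - 2), (1 : ℝ) / (k : ℝ))
              - ((d : ℝ) - 2)) / (d : ℝ))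
            • (Matrix.of (fun _ _ => (1 : ℝ)) : Matrix (Fin d) (Fin d) ℝ) := by
  obtain ⟨n, rfl⟩ : ∃ n, d = n + 2 := ⟨d - 2, by omega⟩
  ext i j
  simp only [transpose_Zmat_mul_Wmat_mul_Zmat_apply, Matrix.add_apply, Matrix.smul_apply, of_apply,
    smul_eq_mul, Nat.add_sub_cancel, sum_Icc_one_div_eq_harmonic]
  push_cast
  rcases eq_or_ne i j with rfl | hij
  · rw [pair_eq_singleton, sum_Icc_singleton_shapleyWeight, one_apply_eq]
    field_simp
    ring
  · rw [sum_Icc_pair_shapleyWeight n hij, one_apply_ne hij]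
    field_simp
    ring
end

section
/- With U = sqrt(d/(d−1)) · sqrt(W) · Z · Q as above, for every λ ∈ R we have U^T · sqrt(W) Z · 1 = 0; consequently, for b_λ = sqrt(d/(d−1))·(sqrt(W)v − λ sqrt(W)Z1) and any λ, μ ∈ R, argmin_x ||U x − b_λ||² = argmin_x ||U x − b_μ||². -/
open Finset Matrix

/-- The diagonal matrix `√W`. -/
noncomputable def sqrtWmat (d : ℕ) : Matrix (SubsetIdx d) (SubsetIdx d) ℝ :=
  Matrix.diagonal fun S => Real.sqrt (kernelWeight d S.1)

/-- `U = √(d/(d-1))·√W·Z·Q`. -/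
noncomputable def Umat (d : ℕ) (Q : Matrix (Fin d) (Fin (d - 1)) ℝ) :
    Matrix (SubsetIdx d) (Fin (d - 1)) ℝ :=
  Real.sqrt ((d : ℝ) / ((d : ℝ) - 1)) • (sqrtWmat d * Zmat d * Q)

/-- `b_λ = √(d/(d-1))·(√W v - λ √W Z 𝟙)`. -/
noncomputable def bvec (d : ℕ) (v : SubsetIdx d → ℝ) (lam : ℝ) : SubsetIdx d → ℝ :=
  Real.sqrt ((d : ℝ) / ((d : ℝ) - 1)) •
    (sqrtWmat d *ᵥ v - lam • ((sqrtWmat d * Zmat d) *ᵥ fun _ => (1 : ℝ)))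

/-- Swapping two coordinates gives a self-equivalence of the index type. -/
noncomputable def swapEquiv (d : ℕ) (j j' : Fin d) : SubsetIdx d ≃ SubsetIdx d :=
  Equiv.subtypeEquiv (Equiv.swap j j').finsetCongr (by
    intro S
    simp [Equiv.finsetCongr_apply, Finset.map_nonempty, ← Finset.card_eq_iff_eq_univ,
      not_iff_not])

/-- Sums of cardinality-only functions over subsets containing a fixed element
do not depend on the element. -/
lemma sum_swap_indicator (d : ℕ) (g : ℕ → ℝ) (j j' : Fin d) :
    ∑ S : SubsetIdx d, (if j ∈ S.1 then g S.1.card else 0)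
    = ∑ S : SubsetIdx d, (if j' ∈ S.1 then g S.1.card else 0) := by
  refine Fintype.sum_equiv (swapEquiv d j j') _ _ ?_
  intro S
  have hmem : j' ∈ ((swapEquiv d j j') S).1 ↔ j ∈ S.1 := by
    simp [swapEquiv, Equiv.finsetCongr_apply, Finset.mem_map_equiv, Equiv.swap_apply_right]
  have hcard : ((swapEquiv d j j') S).1.card = S.1.card := by
    simp [swapEquiv, Equiv.finsetCongr_apply]
  rw [hcard]; exact (if_congr hmem.symm rfl rfl)

/-- `Uᵀ·√W Z·𝟙 = 0`, and consequently the minimizers of `x ↦ ‖U x - b_λ‖²` do not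
depend on `λ`. -/
theorem stmt_4 (d : ℕ) (hd : 3 ≤ d) (Q : Matrix (Fin d) (Fin (d - 1)) ℝ)
    (hQ1 : Qᵀ * Q = 1) (hQ2 : Qᵀ *ᵥ (fun _ => (1 : ℝ)) = 0)
    (v : SubsetIdx d → ℝ) (lam mu : ℝ) :
    (Umat d Q)ᵀ *ᵥ ((sqrtWmat d * Zmat d) *ᵥ fun _ => (1 : ℝ)) = 0 ∧
    {x : Fin (d - 1) → ℝ |
        ∀ y, ∑ i, (Umat d Q *ᵥ x - bvec d v lam) i ^ 2
              ≤ ∑ i, (Umat d Q *ᵥ y - bvec d v lam) i ^ 2}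
      = {x : Fin (d - 1) → ℝ |
          ∀ y, ∑ i, (Umat d Q *ᵥ x - bvec d v mu) i ^ 2
                ≤ ∑ i, (Umat d Q *ᵥ y - bvec d v mu) i ^ 2} := by
  set c := Real.sqrt ((d : ℝ) / ((d : ℝ) - 1)) with hc
  set M := sqrtWmat d * Zmat d with hM
  set w := M *ᵥ (fun _ => (1 : ℝ)) with hw
  have hMapp : ∀ (S : SubsetIdx d) (j : Fin d),
      M S j = Real.sqrt (kernelWeight d S.1) * (if j ∈ S.1 then 1 else 0) := by
    intro S j; simp [hM, sqrtWmat, Zmat, Matrix.diagonal_mul]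
  have hwapp : ∀ S : SubsetIdx d,
      w S = Real.sqrt (kernelWeight d S.1) * S.1.card := by
    intro S
    simp [hw, hM, sqrtWmat, Zmat, Matrix.diagonal_mul, mulVec, dotProduct, mul_ite,
      ite_smul]
    ring
  have hd0 : 0 < d := by omega
  let j0 : Fin d := ⟨0, hd0⟩
  set C := (Mᵀ *ᵥ w) j0 with hC
  let g : ℕ → ℝ := fun n =>
    Real.sqrt (((d : ℝ) - 1) / ((d.choose n : ℝ) * (n : ℝ) * ((d : ℝ) - (n : ℝ))))
      * (Real.sqrt (((d : ℝ) - 1) / ((d.choose n : ℝ) * (n : ℝ) * ((d : ℝ) - (n : ℝ)))) * n)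
  have hform : ∀ j : Fin d, (Mᵀ *ᵥ w) j
      = ∑ S : SubsetIdx d, (if j ∈ S.1 then g S.1.card else 0) := by
    intro j
    simp only [mulVec, dotProduct, Matrix.transpose_apply]
    refine Finset.sum_congr rfl fun S _ => ?_
    rw [hMapp, hwapp]
    by_cases h : j ∈ S.1 <;> simp [h, g, kernelWeight] <;> ring
  have hconst : ∀ j : Fin d, (Mᵀ *ᵥ w) j = C := by
    intro j
    rw [hC, hform j, hform j0]
    exact sum_swap_indicator d g j j0
  have hMTw : Mᵀ *ᵥ w = C • (fun _ => (1 : ℝ)) := by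
    funext j
    simp [hconst j]
  have hker : (Umat d Q)ᵀ *ᵥ w = 0 := by
    rw [Umat, ← hM, Matrix.transpose_smul, Matrix.transpose_mul, Matrix.smul_mulVec,
      ← Matrix.mulVec_mulVec, hMTw, Matrix.mulVec_smul, hQ2]
    simp
  refine ⟨hker, ?_⟩
  have horth : ∀ x : Fin (d - 1) → ℝ,
      ∑ S : SubsetIdx d, (Umat d Q *ᵥ x) S * w S = 0 := by
    intro x
    have : ∑ S : SubsetIdx d, (Umat d Q *ᵥ x) S * w S = w ⬝ᵥ (Umat d Q *ᵥ x) := by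
      simp [dotProduct, mul_comm]
    rw [this, Matrix.dotProduct_mulVec, ← Matrix.mulVec_transpose, hker, zero_dotProduct]
  have hbv : ∀ (lam : ℝ) (i : SubsetIdx d),
      bvec d v lam i = c * (sqrtWmat d *ᵥ v) i - (c * lam) * w i := by
    intro lam i
    simp only [bvec, ← hc, ← hM, ← hw, Pi.smul_apply, Pi.sub_apply, smul_eq_mul]
    ring
  have hobj : ∀ (lam : ℝ) (x : Fin (d - 1) → ℝ),
      ∑ i, (Umat d Q *ᵥ x - bvec d v lam) i ^ 2
      = (∑ i, ((Umat d Q *ᵥ x) i - c * (sqrtWmat d *ᵥ v) i) ^ 2)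
        + ((2 * (c * lam)) * ((∑ i, (Umat d Q *ᵥ x) i * w i)
            + ∑ i, (-(c * (sqrtWmat d *ᵥ v) i)) * w i)
          + (c * lam) ^ 2 * ∑ i, w i ^ 2) := by
    intro lam x
    have expand : ∀ i, (Umat d Q *ᵥ x - bvec d v lam) i ^ 2
        = ((Umat d Q *ᵥ x) i - c * (sqrtWmat d *ᵥ v) i) ^ 2
          + ((2 * (c * lam)) * ((Umat d Q *ᵥ x) i * w i + (-(c * (sqrtWmat d *ᵥ v) i)) * w i)
            + (c * lam) ^ 2 * w i ^ 2) := by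
      intro i; rw [Pi.sub_apply, hbv]; ring
    rw [Finset.sum_congr rfl fun i _ => expand i, Finset.sum_add_distrib,
      Finset.sum_add_distrib, ← Finset.mul_sum, ← Finset.mul_sum, Finset.sum_add_distrib]
  have key : ∀ (lam : ℝ) (x y : Fin (d - 1) → ℝ),
      (∑ i, (Umat d Q *ᵥ x - bvec d v lam) i ^ 2
          ≤ ∑ i, (Umat d Q *ᵥ y - bvec d v lam) i ^ 2)
      ↔ (∑ i, ((Umat d Q *ᵥ x) i - c * (sqrtWmat d *ᵥ v) i) ^ 2
          ≤ ∑ i, ((Umat d Q *ᵥ y) i - c * (sqrtWmat d *ᵥ v) i) ^ 2) := by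
    intro lam x y
    rw [hobj lam x, hobj lam y, horth x, horth y]
    exact add_le_add_iff_right _
  ext x
  simp only [Set.mem_setOf_eq]
  constructor <;> intro h y
  · rw [key mu, ← key lam]; exact h y
  · rw [key lam, ← key mu]; exact h y
end

section
/- Every row u_S of U = sqrt(d/(d−1))·sqrt(W)·Z·Q, where S is a subset of size h (1 ≤ h ≤ d−1), satisfies ||u_S||² = 1/C(d,h). In particular the squared row norms of U depend only on the subset size and sum to d−1. -/
open Finset Matrix

lemma QQT (d : ℕ) (hd : 3 ≤ d) (Q : Matrix (Fin d) (Fin (d - 1)) ℝ)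
    (hQ1 : Qᵀ * Q = 1) (hQ2 : Qᵀ *ᵥ (fun _ => (1 : ℝ)) = 0) (i k : Fin d) :
    (Q * Qᵀ) i k = (if i = k then 1 else 0) - 1 / d := by
  have hd0 : (0:ℝ) < d := by positivity
  set A : Matrix (Fin d) (Fin (d - 1) ⊕ Fin 1) ℝ :=
    Matrix.of fun i j => Sum.elim (fun j' => Q i j') (fun _ => Real.sqrt (1/d)) j with hA
  have e : Fin d ≃ Fin (d - 1) ⊕ Fin 1 :=
    (finCongr (by omega : d = d - 1 + 1)).trans finSumFinEquiv.symm
  have hATA : Aᵀ * A = 1 := by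
    ext j j'
    rcases j with j | j <;> rcases j' with j' | j' <;>
      simp only [Matrix.mul_apply, Matrix.transpose_apply, hA, Matrix.of_apply, Sum.elim_inl,
        Sum.elim_inr, Matrix.one_apply]
    · have := congrFun (congrFun hQ1 j) j'
      simpa [Matrix.mul_apply, Matrix.one_apply, Sum.inl.injEq] using this
    · have := congrFun hQ2 j
      simp only [Matrix.mulVec, Matrix.transpose_apply, dotProduct, mul_one, Pi.zero_apply] at this
      simp [← Finset.sum_mul, this]
    · have := congrFun hQ2 j'
      simp only [Matrix.mulVec, Matrix.transpose_apply, dotProduct, mul_one, Pi.zero_apply] at this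
      simp [← Finset.mul_sum, this]
    · fin_cases j; fin_cases j'
      simp only [Finset.sum_const, Finset.card_univ, Fintype.card_fin, nsmul_eq_mul]
      rw [Real.mul_self_sqrt (by positivity : (0:ℝ) ≤ 1/(d:ℝ))]
      simp [hd0.ne']
  have hAAT : A * Aᵀ = 1 := (Matrix.mul_eq_one_comm_of_equiv e.symm).mp hATA
  have := congrFun (congrFun hAAT i) k
  simp only [Matrix.mul_apply, Matrix.transpose_apply, Fintype.sum_sum_type, hA,
    Matrix.of_apply, Sum.elim_inl, Sum.elim_inr, Matrix.one_apply] at this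
  have hs : Real.sqrt (1/d) * Real.sqrt (1/d) = 1/d :=
    Real.mul_self_sqrt (by positivity)
  rw [Finset.sum_const, Finset.card_univ, Fintype.card_fin, one_smul, hs] at this
  rw [Matrix.mul_apply]
  simp only [Matrix.transpose_apply]
  linarith [this]


lemma rownorm (d : ℕ) (hd : 3 ≤ d) (Q : Matrix (Fin d) (Fin (d - 1)) ℝ)
    (hQ1 : Qᵀ * Q = 1) (hQ2 : Qᵀ *ᵥ (fun _ => (1 : ℝ)) = 0) (S : SubsetIdx d) :
    ∑ j, (Umat d Q S j) ^ 2 = 1 / (d.choose S.1.card : ℝ) := by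
  have hd0 : (0:ℝ) < d := by positivity
  have hd1 : (1:ℝ) < (d:ℝ) := by exact_mod_cast (by omega : 1 < d)
  set h := S.1.card with hh
  have hh1 : 1 ≤ h := Finset.card_pos.mpr S.2.1
  have hhd : h < d := by
    have := Finset.card_lt_card (Finset.ssubset_univ_iff.mpr S.2.2)
    simpa using this
  have hhr : (h:ℝ) < d := by exact_mod_cast hhd
  have hhr1 : (1:ℝ) ≤ h := by exact_mod_cast hh1
  have hc0 : (0:ℝ) < (d.choose h : ℝ) := by
    exact_mod_cast Nat.choose_pos hhd.le
  have hden : (0:ℝ) < (d.choose h : ℝ) * (h:ℝ) * ((d:ℝ) - (h:ℝ)) :=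
    mul_pos (mul_pos hc0 (by linarith)) (by linarith)
  have hw0 : 0 ≤ kernelWeight d S.1 := by
    unfold kernelWeight
    rw [← hh]
    exact div_nonneg (by linarith) hden.le
  -- entry formula
  have hU : ∀ j, Umat d Q S j =
      Real.sqrt ((d : ℝ) / ((d : ℝ) - 1)) * (Real.sqrt (kernelWeight d S.1) *
        ∑ i ∈ S.1, Q i j) := by
    intro j
    simp only [Umat, Matrix.smul_apply, smul_eq_mul]
    congr 1
    rw [Matrix.mul_apply]
    have hrow : ∀ i, (sqrtWmat d * Zmat d) S i =
        Real.sqrt (kernelWeight d S.1) * (if i ∈ S.1 then (1:ℝ) else 0) := by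
      intro i
      rw [sqrtWmat, Matrix.diagonal_mul]
      rfl
    simp only [hrow, mul_ite, mul_one, mul_zero, ite_mul, zero_mul]
    rw [← Finset.sum_filter, Finset.filter_mem_eq_inter, Finset.univ_inter, Finset.mul_sum]
  have key : ∑ j, (∑ i ∈ S.1, Q i j) ^ 2 = (h:ℝ) - (h:ℝ)^2 / d := by
    have : ∀ j, (∑ i ∈ S.1, Q i j) ^ 2 = ∑ i ∈ S.1, ∑ k ∈ S.1, Q i j * Q k j := by
      intro j
      rw [sq, Finset.sum_mul_sum]
    simp only [this]
    rw [Finset.sum_comm]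
    have : ∀ i ∈ S.1, ∑ j, ∑ k ∈ S.1, Q i j * Q k j = ∑ k ∈ S.1, (Q * Qᵀ) i k := by
      intro i _
      rw [Finset.sum_comm]
      exact Finset.sum_congr rfl fun k _ => by rw [Matrix.mul_apply]; rfl
    rw [Finset.sum_congr rfl this]
    have : ∀ i ∈ S.1, ∑ k ∈ S.1, (Q * Qᵀ) i k = 1 - (h:ℝ)/d := by
      intro i hi
      rw [Finset.sum_congr rfl (fun k _ => QQT d hd Q hQ1 hQ2 i k)]
      rw [Finset.sum_sub_distrib, Finset.sum_ite_eq S.1 i (fun _ => (1:ℝ)), if_pos hi,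
        Finset.sum_const, nsmul_eq_mul, ← hh]
      ring
    rw [Finset.sum_congr rfl this, Finset.sum_const, ← hh, nsmul_eq_mul]
    ring
  simp only [hU, mul_pow, ← Finset.mul_sum, key]
  rw [Real.sq_sqrt (div_nonneg hd0.le (by linarith : (0:ℝ) ≤ (d:ℝ)-1)), Real.sq_sqrt hw0]
  unfold kernelWeight
  rw [← hh]
  have h1 : ((d:ℝ) - 1) ≠ 0 := by linarith
  have h2 : ((d:ℝ) - (h:ℝ)) ≠ 0 := by linarith
  have h3 : ((h:ℝ)) ≠ 0 := by linarith
  have h4 : ((d:ℝ)) ≠ 0 := by linarith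
  have h5 : ((d.choose h : ℝ)) ≠ 0 := hc0.ne'
  field_simp


lemma sumall (d : ℕ) (hd : 3 ≤ d) :
    ∑ S : SubsetIdx d, 1 / (d.choose S.1.card : ℝ) = (d : ℝ) - 1 := by
  classical
  set f : Finset (Fin d) → ℝ := fun S => 1 / (d.choose S.card : ℝ) with hf
  have hsub : ∑ S : SubsetIdx d, f S.1
      = ∑ S ∈ Finset.univ.filter (fun S : Finset (Fin d) => S.Nonempty ∧ S ≠ Finset.univ), f S := by
    refine (Finset.sum_subtype _ (fun x => ?_) f).symm
    simp
  have htotal : ∑ S : Finset (Fin d), f S = (d : ℝ) + 1 := by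
    rw [← Finset.powerset_univ, hf]
    rw [Finset.sum_powerset_apply_card (fun m => 1 / (d.choose m : ℝ))]
    rw [Finset.card_univ, Fintype.card_fin]
    have hterm : ∀ m ∈ Finset.range (d+1), d.choose m • (1/(d.choose m:ℝ)) = 1 := by
      intro m hm
      have hc : 0 < d.choose m := Nat.choose_pos (by
        simpa [Nat.lt_succ_iff] using Finset.mem_range.mp hm)
      rw [nsmul_eq_mul, mul_one_div, div_self (by exact_mod_cast hc.ne')]
    rw [Finset.sum_congr rfl hterm, Finset.sum_const, Finset.card_range, nsmul_eq_mul, mul_one]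
    push_cast; ring
  have hcompl : Finset.univ.filter
      (fun S : Finset (Fin d) => ¬(S.Nonempty ∧ S ≠ Finset.univ)) = {∅, Finset.univ} := by
    ext S
    simp only [Finset.mem_filter, Finset.mem_univ, true_and, not_and_or, not_not,
      Finset.not_nonempty_iff_eq_empty, Finset.mem_insert, Finset.mem_singleton]
  have hne : (∅ : Finset (Fin d)) ≠ Finset.univ := by
    intro h
    have : (⟨0, by omega⟩ : Fin d) ∈ (∅ : Finset (Fin d)) := h ▸ Finset.mem_univ _
    simpa using this
  have hsplit := Finset.sum_filter_add_sum_filter_not Finset.univ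
    (fun S : Finset (Fin d) => S.Nonempty ∧ S ≠ Finset.univ) f
  rw [hcompl] at hsplit
  rw [Finset.sum_pair hne] at hsplit
  have hfe : f ∅ = 1 := by simp [hf]
  have hfu : f Finset.univ = 1 := by
    simp [hf, Finset.card_univ, Fintype.card_fin]
  rw [hfe, hfu, htotal] at hsplit
  rw [hsub]
  linarith


/-- Every row `u_S` of `U` indexed by a subset `S` of size `h` satisfies
`‖u_S‖² = 1/C(d,h)`, and the squared row norms sum to `d - 1`. -/
theorem stmt_5 (d : ℕ) (hd : 3 ≤ d) (Q : Matrix (Fin d) (Fin (d - 1)) ℝ)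
    (hQ1 : Qᵀ * Q = 1) (hQ2 : Qᵀ *ᵥ (fun _ => (1 : ℝ)) = 0) :
    (∀ S : SubsetIdx d, ∑ j, (Umat d Q S j) ^ 2 = 1 / (d.choose S.1.card : ℝ)) ∧
    (∑ S : SubsetIdx d, ∑ j, (Umat d Q S j) ^ 2 = (d : ℝ) - 1) := by
  refine ⟨rownorm d hd Q hQ1 hQ2, ?_⟩
  rw [Finset.sum_congr rfl (fun S _ => rownorm d hd Q hQ1 hQ2 S)]
  exact sumall d hd
end
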